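/- Let Γ be a group with a finite normal subgroup G such that Γ/G ≅ ℤ^c. Then there exists a finite group H and a surjective homomorphism φ : Γ → H whose restriction to G is injective. -/

import Mathlib

/-!
Let `C` be the centralizer of `G`; it has finite index, since `Γ / C` embeds in `Aut G`.
Because `Γ / G` is abelian, commutators of `Γ` lie in `G`, so for `x, y ∈ C` the commutator
`d = ⁅y⁻¹, x⁻¹⁆` commutes with `x` and `y` and `(x y) ^ k = x ^ k y ^ k d ^ (k choose 2)`.
For `n = 2 |G|` this makes `x ↦ x ^ n` a homomorphism on `C`. Its image `N` is normal in `Γ`,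
meets `G` trivially because `Γ / G` is torsion-free, and has finite index because its image in
`Γ / G ≅ ℤ ^ c` contains every `m`-th power, `m = n [Γ : C]`. Take `H = Γ / N`.
-/

open scoped commutatorElement

theorem pow_mul_eq_mul_pow_mul_pow {Γ : Type*} [Group Γ] {x y d : Γ} (h : y * x = x * y * d)
    (hdy : Commute d y) (k : ℕ) : y ^ k * x = x * y ^ k * d ^ k := by
  induction k with
  | zero => simp
  | succ k ih =>
    calc y ^ (k + 1) * x = y * (y ^ k * x) := by group
      _ = y * x * (y ^ k * d ^ k) := by rw [ih]; group
      _ = x * y * (d * y ^ k) * d ^ k := by rw [h]; group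
      _ = x * y ^ (k + 1) * d ^ (k + 1) := by rw [(hdy.pow_right k).eq]; group

theorem mul_pow_eq_pow_mul_pow_mul_pow_choose {Γ : Type*} [Group Γ] {x y d : Γ}
    (h : y * x = x * y * d) (hdx : Commute d x) (hdy : Commute d y) (k : ℕ) :
    (x * y) ^ k = x ^ k * y ^ k * d ^ k.choose 2 := by
  induction k with
  | zero => simp
  | succ k ih =>
    calc (x * y) ^ (k + 1) = x ^ k * (y ^ k * d ^ k.choose 2 * x) * y := by
          rw [pow_succ, ih]; group
      _ = x ^ k * (y ^ k * x) * d ^ k.choose 2 * y := by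
          rw [mul_assoc (y ^ k), (hdx.pow_left _).eq]; group
      _ = x ^ (k + 1) * y ^ k * (d ^ (k + k.choose 2) * y) := by
          rw [pow_mul_eq_mul_pow_mul_pow h hdy]; group
      _ = x ^ (k + 1) * y ^ (k + 1) * d ^ (k + 1).choose 2 := by
          rw [(hdy.pow_left _).eq, Nat.choose_succ_succ, Nat.choose_one_right]; group

namespace Subgroup

variable {Γ Q : Type*} [Group Γ] [CommGroup Q]

theorem centralizer_eq_ker_conjNormal (G : Subgroup Γ) [G.Normal] :
    centralizer (G : Set Γ) = (MulAut.conjNormal : Γ →* MulAut G).ker := by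
  ext x
  simp only [mem_centralizer_iff, MonoidHom.mem_ker, MulEquiv.ext_iff, Subtype.ext_iff,
    MulAut.conjNormal_apply, MulAut.one_apply, SetLike.mem_coe, Subtype.forall]
  exact forall₂_congr fun h _ => by rw [mul_inv_eq_iff_eq_mul, eq_comm]

instance finiteIndex_centralizer (G : Subgroup Γ) [G.Normal] [Finite G] :
    (centralizer (G : Set Γ)).FiniteIndex := by
  rw [centralizer_eq_ker_conjNormal]
  infer_instance

theorem finiteIndex_of_finiteIndex_map {N : Subgroup Γ} [N.Normal] {f : Γ →* Q}
    (hf : Function.Surjective f) [Finite f.ker] [(N.map f).FiniteIndex] : N.FiniteIndex := by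
  have hsup : (N ⊔ f.ker).index ≠ 0 := by
    simpa [index_map, f.range_eq_top_of_surjective hf]
      using (FiniteIndex.index_ne_zero : (N.map f).index ≠ 0)
  constructor
  rw [← relIndex_mul_index (le_sup_left : N ≤ N ⊔ f.ker), relIndex_sup_left]
  exact mul_ne_zero (N.subgroupOf f.ker).index_ne_zero_of_finite hsup

variable (G : Subgroup Γ)

theorem pow_card_eq_one_of_mem {x : Γ} (hx : x ∈ G) : x ^ Nat.card G = 1 :=
  congrArg Subtype.val (pow_card_eq_one' (x := (⟨x, hx⟩ : G)))

theorem mul_pow_two_card_of_mem_centralizer (hG : _root_.commutator Γ ≤ G) {x y : Γ}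
    (hx : x ∈ centralizer (G : Set Γ)) (hy : y ∈ centralizer (G : Set Γ)) :
    (x * y) ^ (2 * Nat.card G) = x ^ (2 * Nat.card G) * y ^ (2 * Nat.card G) := by
  set d : Γ := ⁅y⁻¹, x⁻¹⁆
  have hd : d ∈ G := hG (commutator_mem_commutator (mem_top _) (mem_top _))
  have h : y * x = x * y * d := by simp only [d, commutatorElement_def]; group
  have hchoose : (2 * Nat.card G).choose 2 = Nat.card G * (2 * Nat.card G - 1) := by
    rw [Nat.choose_two_right, mul_assoc, Nat.mul_div_cancel_left _ two_pos]
  rw [mul_pow_eq_pow_mul_pow_mul_pow_choose h (mem_centralizer_iff.mp hx d hd)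
    (mem_centralizer_iff.mp hy d hd), hchoose, pow_mul d, pow_card_eq_one_of_mem G hd, one_pow,
    mul_one]

variable (hG : _root_.commutator Γ ≤ G)

noncomputable def centralizerPowHom : centralizer (G : Set Γ) →* Γ :=
  MonoidHom.mk' (fun x => (x : Γ) ^ (2 * Nat.card G))
    fun x y => mul_pow_two_card_of_mem_centralizer G hG x.2 y.2

theorem mem_range_centralizerPowHom {z : Γ} :
    z ∈ (centralizerPowHom G hG).range ↔
      ∃ x ∈ centralizer (G : Set Γ), x ^ (2 * Nat.card G) = z := by
  simp [centralizerPowHom]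

instance normal_range_centralizerPowHom [G.Normal] : (centralizerPowHom G hG).range.Normal where
  conj_mem z hz g := by
    obtain ⟨x, hx, rfl⟩ := (mem_range_centralizerPowHom G hG).mp hz
    refine (mem_range_centralizerPowHom G hG).mpr
      ⟨g * x * g⁻¹, (normal_centralizer (H := G)).conj_mem x hx g, ?_⟩
    simp

variable [Finite G]

theorem range_centralizerPowHom_inf_eq_bot [IsMulTorsionFree Q] {f : Γ →* Q} (hf : f.ker = G) :
    (centralizerPowHom G hG).range ⊓ G = ⊥ := by
  refine (eq_bot_iff_forall _).mpr fun z hz => ?_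
  obtain ⟨hzN, hzG⟩ := mem_inf.mp hz
  obtain ⟨x, -, rfl⟩ := (mem_range_centralizerPowHom G hG).mp hzN
  have hfx : f (x ^ (2 * Nat.card G)) = 1 := by rwa [← MonoidHom.mem_ker, hf]
  have hxG : x ∈ G := by
    rw [← hf, MonoidHom.mem_ker]
    rwa [map_pow, pow_eq_one_iff_left (mul_ne_zero two_ne_zero Nat.card_pos.ne')] at hfx
  rw [mul_comm, pow_mul, pow_card_eq_one_of_mem G hxG, one_pow]

theorem finiteIndex_range_centralizerPowHom [G.Normal] [Group.FG Q] {f : Γ →* Q}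
    (hf : Function.Surjective f) (hfG : f.ker = G) :
    (centralizerPowHom G hG).range.FiniteIndex := by
  set m := (centralizer (G : Set Γ)).index * (2 * Nat.card G)
  have hm : m ≠ 0 :=
    mul_ne_zero (centralizer (G : Set Γ)).index_ne_zero_of_finite (by simp [Nat.card_pos.ne'])
  have hpow : ∀ y : Γ, y ^ m ∈ (centralizerPowHom G hG).range := fun y =>
    (mem_range_centralizerPowHom G hG).mpr ⟨_, pow_index_mem _ y, (pow_mul y _ _).symm⟩
  have : ((centralizerPowHom G hG).range.map f).FiniteIndex := by
    have := finiteIndex_range_powMonoidHom_of_fg Q hm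
    refine finiteIndex_of_le (H := (powMonoidHom m).range) ?_
    rintro _ ⟨q, rfl⟩
    obtain ⟨y, rfl⟩ := hf q
    exact ⟨y ^ m, hpow y, map_pow f y m⟩
  have : Finite f.ker := hfG ▸ inferInstance
  exact finiteIndex_of_finiteIndex_map hf

end Subgroup

theorem exists_surjective_finite_injective_of_inf_eq_bot.{w} {Γ : Type*} [Group Γ]
    {N G : Subgroup Γ} [N.Normal] [N.FiniteIndex] (hNG : N ⊓ G = ⊥) :
    ∃ (H : Type w) (_ : Group H) (_ : Finite H) (φ : Γ →* H),
      Function.Surjective φ ∧ Function.Injective (fun g : G => φ (g : Γ)) := by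
  let φ := (Shrink.mulEquiv.{w} (α := Γ ⧸ N)).symm.toMonoidHom.comp (QuotientGroup.mk' N)
  refine ⟨Shrink.{w} (Γ ⧸ N), inferInstance, inferInstance, φ,
    Shrink.mulEquiv.symm.surjective.comp (QuotientGroup.mk'_surjective N),
    (injective_iff_map_eq_one (φ.domRestrict G)).mpr fun g hg => ?_⟩
  have hgN : (g : Γ) ∈ N := by simpa [φ] using hg
  exact Subtype.ext ((Subgroup.eq_bot_iff_forall _).mp hNG g ⟨hgN, g.2⟩)

/-- If `Γ` has a finite normal subgroup `G` with `Γ/G ≅ ℤ^c`, then there is a finite group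
`H` and a surjection `φ : Γ → H` whose restriction to `G` is injective. -/
theorem stmt6 {Γ : Type*} [Group Γ] (G : Subgroup Γ) [G.Normal] [Finite G] (c : ℕ)
    (e : (Γ ⧸ G) ≃* Multiplicative (Fin c → ℤ)) :
    ∃ (H : Type _) (_ : Group H) (_ : Finite H) (φ : Γ →* H),
      Function.Surjective φ ∧ Function.Injective (fun g : G => φ (g : Γ)) := by
  let f : Γ →* Multiplicative (Fin c → ℤ) := (e : Γ ⧸ G →* _).comp (QuotientGroup.mk' G)
  have hf : Function.Surjective f := e.surjective.comp (QuotientGroup.mk'_surjective G)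
  have hfG : f.ker = G := by rw [MonoidHom.ker_mulEquiv_comp, QuotientGroup.ker_mk']
  have hG : commutator Γ ≤ G := hfG ▸ Abelianization.commutator_subset_ker f
  have := G.finiteIndex_range_centralizerPowHom hG hf hfG
  exact exists_surjective_finite_injective_of_inf_eq_bot
    (G.range_centralizerPowHom_inf_eq_bot hG hfG)
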